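/- arXiv:2403.15628 — 2 statements merged into one kernel-verified Lean document; each statement's English description precedes it below -/
import Mathlib

section
/- Let τ : Ω → Ω be an ergodic measure-preserving transformation on a nonatomic probability space (Ω,ℬ,μ). Then for every integer n ≥ 1 and every ε > 0 there exists B ∈ ℬ such that B, τ⁻¹(B), …, τ^{-(n-1)}(B) are pairwise disjoint and μ(Ω ∖ ⋃_{i=0}^{n-1} τ^{-i}(B)) < ε. -/
/-!
Nonatomicity yields a set `A` with `0 < μ A < ε / n`, and ergodicity makes almost every orbit
enter `A`. Let `B` be the set of points whose first entrance time into `A` is a positive multiple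
of `n`. Along an orbit the first entrance time drops by one per step, so the floors `τ^[i] ⁻¹' B`,
`i < n`, are disjoint, and a point they miss enters `A` before time `n`: the uncovered part has
measure at most `n * μ A < ε`.
-/

open MeasureTheory Set ENNReal

def IsNonatomic {Ω : Type*} [MeasurableSpace Ω] (μ : Measure Ω) : Prop :=
  ∀ A : Set Ω, MeasurableSet A → 0 < μ A →
    ∃ B : Set Ω, MeasurableSet B ∧ B ⊆ A ∧ 0 < μ B ∧ μ B < μ A

namespace IsNonatomic

variable {Ω : Type*} [MeasurableSpace Ω] {μ : Measure Ω} {A : Set Ω}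

theorem exists_pos_measure_le_half (hμ : IsNonatomic μ) (hA : MeasurableSet A)
    (hA₀ : 0 < μ A) : ∃ C, MeasurableSet C ∧ 0 < μ C ∧ μ C ≤ 2⁻¹ * μ A := by
  obtain ⟨B, hB, hBA, hB₀, hBlt⟩ := hμ A hA hA₀
  have hsplit : μ B + μ (A \ B) = μ A := by
    rw [← measure_inter_add_sdiff A hB, inter_eq_right.2 hBA]
  have hAB₀ : 0 < μ (A \ B) := by
    refine pos_iff_ne_zero.2 fun h => hBlt.ne ?_
    rw [← hsplit, h, add_zero]
  have half_le {c : ℝ≥0∞} (hc : c + c ≤ μ A) : c ≤ 2⁻¹ * μ A := by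
    rw [← ENNReal.div_eq_inv_mul, ENNReal.le_div_iff_mul_le (by simp) (by simp), mul_two]
    exact hc
  rcases le_total (μ B) (μ (A \ B)) with h | h
  · exact ⟨B, hB, hB₀, half_le (by rw [← hsplit]; gcongr)⟩
  · exact ⟨A \ B, hA.diff hB, hAB₀, half_le (by rw [← hsplit]; gcongr)⟩

theorem exists_pos_measure_le_inv_two_pow (hμ : IsNonatomic μ) (hA : MeasurableSet A)
    (hA₀ : 0 < μ A) (m : ℕ) : ∃ C, MeasurableSet C ∧ 0 < μ C ∧ μ C ≤ 2⁻¹ ^ m * μ A := by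
  induction m with
  | zero => exact ⟨A, hA, hA₀, by simp⟩
  | succ m ih =>
    obtain ⟨C, hC, hC₀, hCle⟩ := ih
    obtain ⟨D, hD, hD₀, hDle⟩ := hμ.exists_pos_measure_le_half hC hC₀
    refine ⟨D, hD, hD₀, hDle.trans ?_⟩
    calc 2⁻¹ * μ C ≤ 2⁻¹ * (2⁻¹ ^ m * μ A) := by gcongr
      _ = 2⁻¹ ^ (m + 1) * μ A := by ring

theorem exists_pos_measure_lt (hμ : IsNonatomic μ) (hA : MeasurableSet A) (hA₀ : 0 < μ A)
    (hA_fin : μ A ≠ ∞) {δ : ℝ≥0∞} (hδ : 0 < δ) :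
    ∃ C, MeasurableSet C ∧ 0 < μ C ∧ μ C < δ := by
  have hsmall : ∀ᶠ m : ℕ in Filter.atTop, 2⁻¹ ^ m * μ A < δ :=
    (ENNReal.Tendsto.mul_const (ENNReal.tendsto_pow_atTop_nhds_zero_iff.2 (by norm_num))
      (Or.inr hA_fin)).eventually (gt_mem_nhds (by simpa using hδ))
  obtain ⟨m, hm⟩ := hsmall.exists
  obtain ⟨C, hC, hC₀, hCle⟩ := hμ.exists_pos_measure_le_inv_two_pow hA hA₀ m
  exact ⟨C, hC, hC₀, hCle.trans_lt hm⟩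

end IsNonatomic

theorem ergodic_of_measure_symmDiff_preimage_eq_zero {Ω : Type*} [MeasurableSpace Ω]
    {μ : Measure Ω} [IsProbabilityMeasure μ] {τ : Ω → Ω} (hτ : Measurable τ)
    (hmp : ∀ A : Set Ω, MeasurableSet A → μ (τ ⁻¹' A) = μ A)
    (herg : ∀ A : Set Ω, MeasurableSet A → μ (symmDiff (τ ⁻¹' A) A) = 0 →
      μ A = 0 ∨ μ A = 1) :
    Ergodic τ μ where
  measurable := hτ
  map_eq := Measure.ext fun A hA => by rw [Measure.map_apply hτ hA, hmp A hA]
  aeconst_set A hA hinv := by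
    rw [Filter.eventuallyConst_set', ae_eq_empty, ae_eq_univ, prob_compl_eq_zero_iff hA]
    exact herg A hA (by simp [hinv])

theorem Ergodic.ae_exists_iterate_mem {α : Type*} [MeasurableSpace α] {μ : Measure α}
    [IsFiniteMeasure μ] {f : α → α} {s : Set α} (hf : Ergodic f μ) (hs : MeasurableSet s)
    (hs₀ : μ s ≠ 0) : ∀ᵐ x ∂μ, ∃ k, f^[k] x ∈ s := by
  set U := ⋃ k, f^[k] ⁻¹' s
  have hU : MeasurableSet U := .iUnion fun k => hf.measurable.iterate k hs
  have hfU : f ⁻¹' U ⊆ U := by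
    simp only [U, preimage_iUnion, ← preimage_comp, ← Function.iterate_succ]
    exact iUnion_subset fun k => subset_iUnion (fun k => f^[k] ⁻¹' s) (k + 1)
  rcases hf.ae_empty_or_univ_of_preimage_ae_le hU.nullMeasurableSet hfU.eventuallyLE with h | h
  · exact absurd (measure_mono_null (subset_iUnion (fun k => f^[k] ⁻¹' s) 0) (ae_eq_empty.1 h))
      hs₀
  · filter_upwards [h.mem_iff] with x hx
    simpa [U] using hx

def rokhlinBase {α : Type*} (f : α → α) (A : Set α) (n : ℕ) : Set α :=
  {x | ∃ a, 0 < a ∧ n ∣ a ∧ f^[a] x ∈ A ∧ ∀ k < a, f^[k] x ∉ A}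

section RokhlinBase

variable {α : Type*} {f : α → α} {A : Set α} {n : ℕ}

theorem mem_preimage_iterate_rokhlinBase {x : α} {i : ℕ} :
    x ∈ f^[i] ⁻¹' rokhlinBase f A n ↔
      ∃ a, 0 < a ∧ n ∣ a ∧ f^[a + i] x ∈ A ∧ ∀ k < a, f^[k + i] x ∉ A := by
  simp only [rokhlinBase, mem_preimage, mem_ofPred_eq, Function.iterate_add_apply]

theorem measurableSet_rokhlinBase [MeasurableSpace α] (hf : Measurable f) (hA : MeasurableSet A)
    (n : ℕ) : MeasurableSet (rokhlinBase f A n) := by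
  simp only [rokhlinBase, ofPred_exists, ofPred_and, ofPred_forall]
  exact .iUnion fun a => (MeasurableSet.const _).inter <| (MeasurableSet.const _).inter <|
    (hf.iterate a hA).inter <| .iInter fun k => .iInter fun _ => (hf.iterate k hA).compl

theorem disjoint_preimage_iterate_rokhlinBase_of_lt {i j : ℕ} (hij : i < j) (hj : j < n) :
    Disjoint (f^[i] ⁻¹' rokhlinBase f A n) (f^[j] ⁻¹' rokhlinBase f A n) := by
  refine disjoint_left.2 fun x hxi hxj => ?_
  obtain ⟨a, ha₀, ha_dvd, haA, ha⟩ := mem_preimage_iterate_rokhlinBase.1 hxi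
  obtain ⟨b, hb₀, hb_dvd, hbA, hb⟩ := mem_preimage_iterate_rokhlinBase.1 hxj
  have hn_le_a : n ≤ a := Nat.le_of_dvd ha₀ ha_dvd
  -- both `a + i` and `b + j` are the first entrance time of `x` into `A` after time `j`
  have hab : a + i = b + j := by
    by_contra hne
    rcases Nat.lt_or_gt_of_ne hne with h | h
    · exact hb (a + i - j) (by omega) (by rwa [Nat.sub_add_cancel (by omega)])
    · exact ha (b + j - i) (by omega) (by rwa [Nat.sub_add_cancel (by omega)])
  have : n ≤ a - b := Nat.le_of_dvd (by omega) (Nat.dvd_sub ha_dvd hb_dvd)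
  omega

theorem disjoint_preimage_iterate_rokhlinBase {i j : ℕ} (hi : i < n) (hj : j < n) (hij : i ≠ j) :
    Disjoint (f^[i] ⁻¹' rokhlinBase f A n) (f^[j] ⁻¹' rokhlinBase f A n) := by
  rcases Nat.lt_or_gt_of_ne hij with h | h
  · exact disjoint_preimage_iterate_rokhlinBase_of_lt h hj
  · exact (disjoint_preimage_iterate_rokhlinBase_of_lt h hi).symm

theorem exists_iterate_mem_of_notMem_iUnion_preimage_iterate_rokhlinBase (hn : 0 < n) {x : α}
    (hx : x ∉ ⋃ i ∈ Finset.range n, f^[i] ⁻¹' rokhlinBase f A n) (hA : ∃ k, f^[k] x ∈ A) :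
    ∃ k < n, f^[k] x ∈ A := by
  classical
  set M := Nat.find hA
  refine ⟨M, ?_, Nat.find_spec hA⟩
  by_contra! hnM
  have hMn : M % n < n := Nat.mod_lt M hn
  -- otherwise `x` lies in the floor `M % n` of the tower over `rokhlinBase f A n`
  refine hx (mem_biUnion (Finset.mem_range.2 hMn) (mem_preimage_iterate_rokhlinBase.2
    ⟨M - M % n, by omega, Nat.dvd_sub_mod M, ?_, fun k hk => Nat.find_min hA (by omega)⟩))
  rw [Nat.sub_add_cancel (Nat.mod_le M n)]
  exact Nat.find_spec hA

theorem MeasureTheory.MeasurePreserving.measure_compl_iUnion_preimage_iterate_rokhlinBase_le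
    [MeasurableSpace α] {μ : Measure α} (hf : MeasurePreserving f μ μ) (hA : MeasurableSet A)
    (hae : ∀ᵐ x ∂μ, ∃ k, f^[k] x ∈ A) (hn : 0 < n) :
    μ (⋃ i ∈ Finset.range n, f^[i] ⁻¹' rokhlinBase f A n)ᶜ ≤ n * μ A :=
  calc μ (⋃ i ∈ Finset.range n, f^[i] ⁻¹' rokhlinBase f A n)ᶜ
      ≤ μ (⋃ k ∈ Finset.range n, f^[k] ⁻¹' A) := measure_mono_ae <| by
        filter_upwards [hae] with x hx hxU
        obtain ⟨k, hk, hkA⟩ :=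
          exists_iterate_mem_of_notMem_iUnion_preimage_iterate_rokhlinBase hn hxU hx
        exact mem_biUnion (Finset.mem_range.2 hk) hkA
    _ ≤ ∑ k ∈ Finset.range n, μ (f^[k] ⁻¹' A) := measure_biUnion_finset_le _ _
    _ = n * μ A := by simp [(hf.iterate _).measure_preimage hA.nullMeasurableSet]

end RokhlinBase

/-- **Kakutani–Rokhlin lemma on nonatomic probability spaces:** for every `n ≥ 1` and
`ε > 0` there is a measurable `B` whose first `n` preimage-iterates are pairwise disjoint
and cover `Ω` up to a set of measure less than `ε`. -/
theorem kakutani_rokhlin_nonatomic {Ω : Type*} [MeasurableSpace Ω] (μ : Measure Ω)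
    [IsProbabilityMeasure μ] (τ : Ω → Ω) (hτ : Measurable τ)
    (hmp : ∀ A : Set Ω, MeasurableSet A → μ (τ ⁻¹' A) = μ A)
    (herg : ∀ A : Set Ω, MeasurableSet A → μ (symmDiff (τ ⁻¹' A) A) = 0 →
      μ A = 0 ∨ μ A = 1)
    (hna : ∀ A : Set Ω, MeasurableSet A → 0 < μ A →
      ∃ B : Set Ω, MeasurableSet B ∧ B ⊆ A ∧ 0 < μ B ∧ μ B < μ A)
    (n : ℕ) (hn : 1 ≤ n) (ε : ℝ) (hε : 0 < ε) :
    ∃ B : Set Ω, MeasurableSet B ∧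
      (∀ i j : ℕ, i < n → j < n → i ≠ j → Disjoint (τ^[i] ⁻¹' B) (τ^[j] ⁻¹' B)) ∧
      μ (univ \ ⋃ i ∈ Finset.range n, τ^[i] ⁻¹' B) < ENNReal.ofReal ε := by
  have hτe : Ergodic τ μ := ergodic_of_measure_symmDiff_preimage_eq_zero hτ hmp herg
  obtain ⟨A, hA, hA₀, hA_small⟩ := IsNonatomic.exists_pos_measure_lt hna MeasurableSet.univ
    (by simp) (measure_ne_top μ univ) (δ := ENNReal.ofReal ε / n)
    (ENNReal.div_pos (by simpa using hε) (natCast_ne_top n))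
  refine ⟨rokhlinBase τ A n, measurableSet_rokhlinBase hτ hA n,
    fun i j hi hj hij => disjoint_preimage_iterate_rokhlinBase hi hj hij, ?_⟩
  rw [← compl_eq_univ_sdiff]
  calc _ ≤ n * μ A := hτe.measure_compl_iUnion_preimage_iterate_rokhlinBase_le hA
        (hτe.ae_exists_iterate_mem hA hA₀.ne') hn
    _ < ENNReal.ofReal ε := ENNReal.mul_lt_of_lt_div' hA_small
end

section
/- Let (E,T,S,e) be a conditional expectation preserving system with T strictly positive and S surjective. Then for each component p of e, the components q(p,k), k ≥ 1, are pairwise disjoint and p = ⨆_{N≥1} ∑_{k=1}^{N} q(p,k); that is, the series ∑_{k=1}^{∞} q(p,k) order converges in E to p. -/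
noncomputable section

open Function Set

variable {E : Type*}

/-- `e` is a weak order unit: `e > 0` and `e ⊓ |x| = 0` implies `x = 0`. -/
def WeakOrderUnit [Lattice E] [AddCommGroup E] (e : E) : Prop :=
  0 < e ∧ ∀ x : E, e ⊓ (x ⊔ -x) = 0 → x = 0

/-- `p` is a component of `q ∈ E₊`: `0 ≤ p ≤ q` and `(q - p) ⊓ p = 0`. -/
def IsComponent [Lattice E] [AddCommGroup E] (q p : E) : Prop :=
  0 ≤ p ∧ p ≤ q ∧ (q - p) ⊓ p = 0

/-- `partialSup f n = ⋁_{j < n} f j`, with the empty supremum equal to `0`. -/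
def partialSup [Lattice E] [Zero E] (f : ℕ → E) : ℕ → E
  | 0 => 0
  | n + 1 => partialSup f n ⊔ f n

/-- The band projection of `e` onto the band generated by `g`: `P_g e = ⨆_{m ∈ ℕ} (e ⊓ m•g)`. -/
def bandProjApp [ConditionallyCompleteLattice E] [AddCommGroup E] (g e : E) : E :=
  ⨆ m : ℕ, e ⊓ m • g

/-- `qComp Sinv e p k = p ⊓ S⁻ᵏp ⊓ (e - ⋁_{j=1}^{k-1} S⁻ʲp)` (empty supremum is `0`). -/
def qComp [Lattice E] [AddCommGroup E] (Sinv : E → E) (e p : E) (k : ℕ) : E :=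
  p ⊓ Sinv^[k] p ⊓ (e - partialSup (fun j => Sinv^[j + 1] p) (k - 1))

/-- `(E,T,S,e)` is a conditional expectation preserving system: `E` is a Dedekind complete
Riesz space (typeclass assumptions), `e` is a weak order unit, `T` is a strictly positive
conditional expectation operator with `Te = e`, and `S` is an order-continuous Riesz
homomorphism with `Se = e` and `TS = T`. -/
structure IsCEPS [ConditionallyCompleteLattice E] [AddCommGroup E] [Module ℝ E]
    (T S : E →ₗ[ℝ] E) (e : E) : Prop where
  unit : WeakOrderUnit e
  T_pos : ∀ f : E, 0 ≤ f → 0 ≤ T f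
  T_strictPos : ∀ f : E, 0 ≤ f → T f = 0 → f = 0
  T_proj : ∀ f : E, T (T f) = T f
  T_ordCont : ∀ D : Set E, D.Nonempty → DirectedOn (· ≥ ·) D → IsGLB D 0 →
    IsGLB ((⇑T) '' D) 0
  T_range_sublattice : ∀ x ∈ Set.range T, ∀ y ∈ Set.range T, x ⊔ y ∈ Set.range T
  T_range_dedekind : ∀ D : Set E, D ⊆ Set.range T → D.Nonempty →
    (∃ b ∈ Set.range T, ∀ x ∈ D, x ≤ b) →
    ∃ s ∈ Set.range T, (∀ x ∈ D, x ≤ s) ∧ ∀ b ∈ Set.range T, (∀ x ∈ D, x ≤ b) → s ≤ b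
  T_weakUnit : ∀ u : E, WeakOrderUnit u → WeakOrderUnit (T u)
  Te : T e = e
  S_hom : ∀ x y : E, S (x ⊔ y) = S x ⊔ S y
  S_ordCont : ∀ D : Set E, D.Nonempty → DirectedOn (· ≥ ·) D → IsGLB D 0 →
    IsGLB ((⇑S) '' D) 0
  Se : S e = e
  TS : ∀ f : E, T (S f) = T f

/-- `E` is `T`-universally complete: every upward directed subset `D` of `E₊` for which
`T '' D` is order bounded in `E` has a supremum in `E`. -/
def TUnivComplete [ConditionallyCompleteLattice E] [AddCommGroup E] [Module ℝ E]
    (T : E →ₗ[ℝ] E) : Prop :=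
  ∀ D : Set E, D.Nonempty → D ⊆ {x : E | 0 ≤ x} → DirectedOn (· ≤ ·) D →
    BddAbove ((⇑T) '' D) → BddBelow ((⇑T) '' D) → ∃ s : E, IsLUB D s

/-- `(S, v)` is aperiodic (with `Sinv` the inverse of `S`): for every `N ∈ ℕ` and every
nonzero component `c` of `v` there exist `k ≥ N` and a component `u` of `c` with
`q(u,k) ≠ 0`. -/
def IsAperiodic [Lattice E] [AddCommGroup E] (Sinv : E → E) (e v : E) : Prop :=
  ∀ N : ℕ, ∀ c : E, IsComponent v c → c ≠ 0 →
    ∃ k : ℕ, N ≤ k ∧ ∃ u : E, IsComponent c u ∧ qComp Sinv e u k ≠ 0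

/-- `(S, e)` is periodic (with `Sinv` the inverse of `S`): there is `N ∈ ℕ` such that
`q(c,k) = 0` for all `k ≥ N` and all components `c` of `e` with `0 ≠ c ≠ e`. -/
def IsPeriodic [Lattice E] [AddCommGroup E] (Sinv : E → E) (e : E) : Prop :=
  ∃ N : ℕ, ∀ c : E, IsComponent e c → c ≠ 0 → c ≠ e → ∀ k : ℕ, N ≤ k → qComp Sinv e c k = 0


/-!
Write `g = S⁻¹` and `R N = ⋁_{1 ≤ j ≤ N} gʲp`. Since `g` is an additive lattice automorphism fixing
`e`, every `gʲp` and every `R N` is a component of `e`, and `q(p, k) = p ⊓ gᵏp ⊓ (e - R (k - 1))`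
is the disjointification of the sequence `p ⊓ gᵏp`: the `q(p, k)` are disjoint and their partial
sums are `p ⊓ R N`.

These increase to `p` by a recurrence argument. If `b` bounds all `p ⊓ R N`, the part
`w = p - p ⊓ b` of `p` is disjoint from every `gᵏp`, `k ≥ 1`, so `w, gw, g²w, …` are pairwise
disjoint elements below `e` with `T (gⁱw) = T w`. Hence `n • T w ≤ T e` for all `n`, so `T w = 0`
because a Dedekind complete lattice-ordered group is archimedean, and strict positivity gives
`w = 0`, i.e. `p ≤ b`.
-/

section LatticeZero

variable [Lattice E] [Zero E]

theorem inf_eq_zero_of_le_of_le {a b x y : E} (h : a ⊓ b = 0)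
    (hx : 0 ≤ x) (hy : 0 ≤ y) (hxa : x ≤ a) (hyb : y ≤ b) : x ⊓ y = 0 :=
  le_antisymm ((inf_le_inf hxa hyb).trans h.le) (le_inf hx hy)

variable {f : ℕ → E}

theorem partialSup_mono : Monotone (partialSup f) :=
  monotone_nat_of_le_succ fun _ => le_sup_left

theorem le_partialSup {m n : ℕ} (h : m < n) : f m ≤ partialSup f n :=
  le_sup_right.trans (partialSup_mono h)

theorem partialSup_le {a : E} (ha : 0 ≤ a) (h : ∀ n, f n ≤ a) : ∀ n, partialSup f n ≤ a
  | 0 => ha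
  | n + 1 => sup_le (partialSup_le ha h n) (h n)

end LatticeZero

namespace IsComponent

variable [Lattice E] [AddCommGroup E] {e a b : E}

theorem zero (he : 0 ≤ e) : IsComponent e 0 :=
  ⟨le_rfl, he, by rw [sub_zero, inf_eq_right.2 he]⟩

theorem inf_sub_eq_zero (ha : IsComponent e a) : a ⊓ (e - a) = 0 := by
  rw [inf_comm]; exact ha.2.2

theorem map {E' F : Type*} [Lattice E'] [AddCommGroup E'] [FunLike F E E']
    [AddMonoidHomClass F E E'] [LatticeHomClass F E E'] (φ : F) (ha : IsComponent e a) :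
    IsComponent (φ e) (φ a) :=
  ⟨map_zero φ ▸ OrderHomClass.mono φ ha.1, OrderHomClass.mono φ ha.2.1,
    by rw [← map_sub, ← map_inf, ha.2.2, map_zero]⟩

theorem iterate {F : Type*} [FunLike F E E] [AddMonoidHomClass F E E] [LatticeHomClass F E E]
    (φ : F) (hφ : φ e = e) (ha : IsComponent e a) (n : ℕ) : IsComponent e (φ^[n] a) := by
  induction n with
  | zero => exact ha
  | succ n ih => simpa only [iterate_succ_apply', hφ] using ih.map φ

end IsComponent

section LatticeOrderedGroup

variable [Lattice E] [AddCommGroup E] [AddLeftMono E]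

theorem add_eq_sup_of_inf_eq_zero {a b : E} (h : a ⊓ b = 0) : a + b = a ⊔ b := by
  rw [← inf_add_sup, h, zero_add]

namespace IsComponent

variable {e a b : E}

theorem sup_sub_eq (ha : IsComponent e a) : a ⊔ (e - a) = e := by
  rw [← add_eq_sup_of_inf_eq_zero ha.inf_sub_eq_zero, add_sub_cancel]

theorem sup (ha : IsComponent e a) (hb : IsComponent e b) : IsComponent e (a ⊔ b) := by
  let := AddCommGroup.toDistribLattice E
  have hab : a ⊔ b ≤ e := sup_le ha.2.1 hb.2.1
  refine ⟨ha.1.trans le_sup_left, hab, ?_⟩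
  have hc : 0 ≤ e - (a ⊔ b) := sub_nonneg.2 hab
  rw [inf_sup_left,
    inf_eq_zero_of_le_of_le ha.2.2 hc ha.1 (sub_le_sub_left le_sup_left e) le_rfl,
    inf_eq_zero_of_le_of_le hb.2.2 hc hb.1 (sub_le_sub_left le_sup_right e) le_rfl, sup_idem]

theorem inf (ha : IsComponent e a) (hb : IsComponent e b) : IsComponent e (a ⊓ b) := by
  let := AddCommGroup.toDistribLattice E
  have hab : 0 ≤ a ⊓ b := le_inf ha.1 hb.1
  refine ⟨hab, inf_le_left.trans ha.2.1, ?_⟩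
  rw [sub_inf, inf_sup_right,
    inf_eq_zero_of_le_of_le ha.2.2 (sub_nonneg.2 ha.2.1) hab le_rfl inf_le_left,
    inf_eq_zero_of_le_of_le hb.2.2 (sub_nonneg.2 hb.2.1) hab le_rfl inf_le_right, sup_idem]

theorem partialSup {f : ℕ → E} (he : 0 ≤ e) (hf : ∀ n, IsComponent e (f n)) :
    ∀ n, IsComponent e (partialSup f n)
  | 0 => zero he
  | n + 1 => (IsComponent.partialSup he hf n).sup (hf n)

end IsComponent

variable {f : ℕ → E}

theorem partialSup_inf_eq_zero {x : E} (hx : 0 ≤ x) {n : ℕ} (h : ∀ m < n, f m ⊓ x = 0) :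
    partialSup f n ⊓ x = 0 := by
  let := AddCommGroup.toDistribLattice E
  induction n with
  | zero => exact inf_eq_left.2 hx
  | succ n ih =>
    rw [partialSup, inf_sup_right, ih fun m hm => h m (by omega), h n n.lt_succ_self, sup_idem]

theorem sum_range_eq_partialSup (hf : ∀ n, 0 ≤ f n) (hdisj : Pairwise fun i j => f i ⊓ f j = 0)
    (n : ℕ) : ∑ i ∈ Finset.range n, f i = partialSup f n := by
  induction n with
  | zero => rfl
  | succ n ih =>
    rw [Finset.sum_range_succ, ih, partialSup, add_eq_sup_of_inf_eq_zero]
    exact partialSup_inf_eq_zero (hf n) fun m hm => hdisj hm.ne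

def disjointedPart (e x : E) (f : ℕ → E) (n : ℕ) : E :=
  x ⊓ f n ⊓ (e - partialSup f n)

variable {e x : E}

theorem disjointedPart_nonneg (he : 0 ≤ e) (hf : ∀ n, IsComponent e (f n)) (hx : 0 ≤ x)
    (n : ℕ) : 0 ≤ disjointedPart e x f n :=
  le_inf (le_inf hx (hf n).1) (sub_nonneg.2 (IsComponent.partialSup he hf n).2.1)

theorem pairwise_disjointedPart (he : 0 ≤ e) (hf : ∀ n, IsComponent e (f n)) (hx : 0 ≤ x) :
    Pairwise fun m n => disjointedPart e x f m ⊓ disjointedPart e x f n = 0 := by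
  have key : ∀ {m n}, m < n → disjointedPart e x f m ⊓ disjointedPart e x f n = 0 :=
    fun {m n} hmn => inf_eq_zero_of_le_of_le (IsComponent.partialSup he hf n).inf_sub_eq_zero
      (disjointedPart_nonneg he hf hx m) (disjointedPart_nonneg he hf hx n)
      ((inf_le_left.trans inf_le_right).trans (le_partialSup hmn)) inf_le_right
  intro m n hmn
  rcases hmn.lt_or_gt with h | h
  · exact key h
  · rw [inf_comm]; exact key h

theorem partialSup_disjointedPart (he : 0 ≤ e) (hf : ∀ n, IsComponent e (f n)) (hx : 0 ≤ x)
    (n : ℕ) : partialSup (disjointedPart e x f) n = x ⊓ partialSup f n := by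
  let := AddCommGroup.toDistribLattice E
  induction n with
  | zero => exact (inf_eq_right.2 hx).symm
  | succ n ih =>
    set R := partialSup f n
    have hxf : x ⊓ f n = x ⊓ f n ⊓ R ⊔ disjointedPart e x f n := by
      rw [disjointedPart, ← inf_sup_left, (IsComponent.partialSup he hf n).sup_sub_eq,
        inf_eq_left.2 (inf_le_right.trans (hf n).2.1)]
    rw [partialSup, ih, partialSup, inf_sup_left]
    refine le_antisymm (sup_le_sup_left ?_ _) (sup_le le_sup_left ?_)
    · exact le_inf (inf_le_left.trans inf_le_left) (inf_le_left.trans inf_le_right)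
    · rw [hxf]
      exact sup_le_sup_right (inf_le_inf_right R inf_le_left) _

end LatticeOrderedGroup

theorem eq_zero_of_forall_nsmul_le [ConditionallyCompleteLattice E] [AddCommGroup E]
    [AddLeftMono E] {x a : E} (hx : 0 ≤ x) (h : ∀ n : ℕ, n • x ≤ a) : x = 0 := by
  have hbdd : BddAbove (range fun n : ℕ => n • x) := ⟨a, forall_mem_range.2 h⟩
  have hsup : ⨆ n : ℕ, n • x ≤ (⨆ n : ℕ, n • x) - x := ciSup_le fun n =>
    le_sub_iff_add_le.2 (by rw [← succ_nsmul]; exact le_ciSup hbdd (n + 1))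
  exact le_antisymm (le_sub_self_iff _ |>.1 hsup) hx

theorem eq_zero_of_pairwise_inf_eq_zero {V G : Type*} [Lattice E] [AddCommGroup E]
    [AddLeftMono E] [ConditionallyCompleteLattice V] [AddCommGroup V] [AddLeftMono V]
    [FunLike G E V] [AddMonoidHomClass G E V] {T : G} (hT : ∀ x, 0 ≤ x → 0 ≤ T x)
    (hT_strict : ∀ x, 0 ≤ x → T x = 0 → x = 0) {f : ℕ → E} {a : E} (hf : ∀ i, 0 ≤ f i)
    (hfa : ∀ i, f i ≤ a) (hdisj : Pairwise fun i j => f i ⊓ f j = 0)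
    (hTf : ∀ i, T (f i) = T (f 0)) : f 0 = 0 := by
  have hmono : Monotone T := fun x y h => sub_nonneg.1 (map_sub T y x ▸ hT _ (sub_nonneg.2 h))
  refine hT_strict _ (hf 0) (eq_zero_of_forall_nsmul_le (a := T a) (hT _ (hf 0)) fun n => ?_)
  calc n • T (f 0) = T (∑ i ∈ Finset.range n, f i) := by simp [map_sum, hTf]
    _ ≤ T a := hmono <| (sum_range_eq_partialSup hf hdisj n).trans_le <|
        partialSup_le ((hf 0).trans (hfa 0)) hfa n

section Iterate

variable [Lattice E] [AddCommGroup E] {F : Type*} [FunLike F E E] [AddMonoidHomClass F E E]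
  [LatticeHomClass F E E]

theorem pairwise_inf_iterate_eq_zero (φ : F) {w p : E} (hw : 0 ≤ w) (hwp : w ≤ p)
    (h : ∀ k, 0 < k → w ⊓ φ^[k] p = 0) : Pairwise fun i j => φ^[i] w ⊓ φ^[j] w = 0 := by
  have hmono : ∀ k, Monotone φ^[k] := (OrderHomClass.mono φ).iterate
  have key : ∀ i k, 0 < k → φ^[i] w ⊓ φ^[i + k] w = 0 := by
    intro i k hk
    have hwk : w ⊓ φ^[k] w = 0 := inf_eq_zero_of_le_of_le (h k hk) hw
      (iterate_map_zero φ k ▸ hmono k hw) le_rfl (hmono k hwp)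
    rw [iterate_add_apply, ← Semiconj₂.iterate (map_inf φ) i, hwk, iterate_map_zero]
  intro i j hij
  rcases hij.lt_or_gt with h | h
  · obtain ⟨k, rfl⟩ := Nat.exists_eq_add_of_lt h
    exact key i (k + 1) k.succ_pos
  · obtain ⟨k, rfl⟩ := Nat.exists_eq_add_of_lt h
    rw [inf_comm]; exact key j (k + 1) k.succ_pos

theorem le_of_forall_inf_partialSup_iterate_le [AddLeftMono E] {V G : Type*}
    [ConditionallyCompleteLattice V] [AddCommGroup V] [AddLeftMono V] [FunLike G E V]
    [AddMonoidHomClass G E V] {T : G} (hT : ∀ x, 0 ≤ x → 0 ≤ T x)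
    (hT_strict : ∀ x, 0 ≤ x → T x = 0 → x = 0) (φ : F) (hTφ : ∀ x, T (φ x) = T x) {e p b : E}
    (hφe : φ e = e) (hp : IsComponent e p)
    (hb : ∀ N, p ⊓ partialSup (fun j => φ^[j + 1] p) N ≤ b) : p ≤ b := by
  set R := partialSup fun j => φ^[j + 1] p
  have hR : ∀ N, IsComponent e (R N) :=
    IsComponent.partialSup (hp.1.trans hp.2.1) fun j => hp.iterate φ hφe (j + 1)
  set w := p - p ⊓ b
  have hw : 0 ≤ w := sub_nonneg.2 inf_le_left
  have hwp : w ≤ p := sub_le_self p (le_inf hp.1 ((inf_eq_right.2 hp.1).symm.trans_le (hb 0)))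
  -- `p ⊓ R N` is a component of `e` below `p ⊓ b`, hence disjoint from `w ≤ e - p ⊓ R N`
  have hwR : ∀ N, w ⊓ (p ⊓ R N) = 0 := fun N =>
    inf_eq_zero_of_le_of_le (hp.inf (hR N)).2.2 hw (hp.inf (hR N)).1
      (sub_le_sub hp.2.1 (le_inf inf_le_left (hb N))) le_rfl
  have hwφ : ∀ k, 0 < k → w ⊓ φ^[k] p = 0 := by
    rintro (_ | k) hk
    · omega
    refine le_antisymm ((le_inf inf_le_left ?_).trans (hwR (k + 1)).le)
      (le_inf hw (iterate_map_zero φ (k + 1) ▸ (OrderHomClass.mono φ).iterate _ hp.1))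
    exact inf_le_inf hwp (le_partialSup (f := fun j => φ^[j + 1] p) k.lt_succ_self)
  have hw0 : w = 0 := eq_zero_of_pairwise_inf_eq_zero (f := fun i => φ^[i] w) (a := e) hT
    hT_strict    (fun i => iterate_map_zero φ i ▸ (OrderHomClass.mono φ).iterate i hw)
    (fun i => iterate_fixed hφe i ▸ (OrderHomClass.mono φ).iterate i (hwp.trans hp.2.1))
    (pairwise_inf_iterate_eq_zero φ hw hwp hwφ)
    (fun i => congrFun (iterate_invariant (funext hTφ) i) w)
  exact inf_eq_left.1 (sub_eq_zero.1 hw0).symm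

end Iterate

namespace IsCEPS

variable [ConditionallyCompleteLattice E] [AddCommGroup E] [AddLeftMono E] [Module ℝ E]
  {T S : E →ₗ[ℝ] E} {e : E}

theorem injective (h : IsCEPS T S e) : Injective S := by
  refine (injective_iff_map_eq_zero S).2 fun x hx => ?_
  have hT : T |x| = 0 := by
    rw [← h.TS, abs, h.S_hom, map_neg, hx, neg_zero, sup_idem, map_zero]
  have habs : |x| = 0 := h.T_strictPos _ (abs_nonneg x) hT
  exact le_antisymm (habs ▸ le_abs_self x) (neg_nonpos.1 (habs ▸ neg_le_abs x))

def orderAddMonoidIso (h : IsCEPS T S e) (hS : Surjective S) : E ≃+o E where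
  toFun := S
  invFun := surjInv hS
  left_inv := leftInverse_surjInv ⟨h.injective, hS⟩
  right_inv := rightInverse_surjInv hS
  map_add' := S.map_add
  map_le_map_iff' {x y} := by
    rw [← sup_eq_right, ← h.S_hom, h.injective.eq_iff, sup_eq_right]

end IsCEPS

theorem decomposition_of_component_general {E : Type*} [ConditionallyCompleteLattice E]
    [AddCommGroup E] [Module ℝ E] [CovariantClass E E (· + ·) (· ≤ ·)]
    (T S : E →ₗ[ℝ] E) (e : E) (hCEPS : IsCEPS T S e)
    (hS : Function.Surjective ⇑S)
    (p : E) (hp : IsComponent e p) :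
    (∀ k l : ℕ, 1 ≤ k → 1 ≤ l → k ≠ l →
      qComp (Function.surjInv hS) e p k ⊓ qComp (Function.surjInv hS) e p l = 0) ∧
    IsLUB (Set.range fun N : ℕ =>
      ∑ k ∈ Finset.Icc 1 (N + 1), qComp (Function.surjInv hS) e p k) p := by
  set Φ := hCEPS.orderAddMonoidIso hS
  have hΦe : Φ.symm e = e := Φ.symm_apply_eq.2 hCEPS.Se.symm
  have hTΦ : ∀ x, T (Φ.symm x) = T x := fun x => by
    rw [← hCEPS.TS]; exact congrArg T (Φ.apply_symm_apply x)
  set f : ℕ → E := fun j => Φ.symm^[j + 1] p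
  have hf : ∀ j, IsComponent e (f j) := fun j => hp.iterate Φ.symm hΦe (j + 1)
  have he : 0 ≤ e := hp.1.trans hp.2.1
  have hq : ∀ k, qComp (surjInv hS) e p (k + 1) = disjointedPart e p f k := fun _ => rfl
  refine ⟨fun k l hk hl hkl => ?_, ?_⟩
  · obtain ⟨k, rfl⟩ := Nat.exists_eq_add_of_le' hk
    obtain ⟨l, rfl⟩ := Nat.exists_eq_add_of_le' hl
    rw [hq, hq]
    exact pairwise_disjointedPart he hf hp.1 (by omega)
  have hsum : ∀ N, ∑ k ∈ Finset.Icc 1 (N + 1), qComp (surjInv hS) e p k =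
      p ⊓ partialSup f (N + 1) := fun N => by
    rw [← Finset.Ico_add_one_right_eq_Icc, Finset.sum_Ico_eq_sum_range, Nat.add_sub_cancel]
    simp only [add_comm 1, hq]
    rw [sum_range_eq_partialSup (disjointedPart_nonneg he hf hp.1)
      (pairwise_disjointedPart he hf hp.1), partialSup_disjointedPart he hf hp.1]
  simp only [hsum]
  refine ⟨forall_mem_range.2 fun N => inf_le_left, fun b hb => ?_⟩
  exact le_of_forall_inf_partialSup_iterate_le hCEPS.T_pos hCEPS.T_strictPos Φ.symm hTΦ hΦe hp
    fun N => (inf_le_inf_left p (partialSup_mono N.le_succ)).trans (hb ⟨N, rfl⟩)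

/-- The components `q(p,k)`, `k ≥ 1`, are pairwise disjoint and the series
`∑_{k=1}^∞ q(p,k)` order converges to `p`, i.e. the partial sums have supremum `p`. -/
theorem decomposition_of_component {E : Type*} [ConditionallyCompleteLattice E]
    [AddCommGroup E] [Module ℝ E] [CovariantClass E E (· + ·) (· ≤ ·)] [PosSMulMono ℝ E]
    (T S : E →ₗ[ℝ] E) (e : E) (hCEPS : IsCEPS T S e)
    (hS : Function.Surjective ⇑S)
    (p : E) (hp : IsComponent e p) :
    (∀ k l : ℕ, 1 ≤ k → 1 ≤ l → k ≠ l →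
      qComp (Function.surjInv hS) e p k ⊓ qComp (Function.surjInv hS) e p l = 0) ∧
    IsLUB (Set.range fun N : ℕ =>
      ∑ k ∈ Finset.Icc 1 (N + 1), qComp (Function.surjInv hS) e p k) p :=
  decomposition_of_component_general T S e hCEPS hS p hp
end
end
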